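/- For no constant A > 0 does the estimate ∑_{m ≤ x} m / rad(m) = O(x (log x)^A) hold; i.e., for every A > 0, limsup_{x → ∞} (∑_{m ≤ x} m/rad(m)) / (x (log x)^A) = ∞. -/

import Mathlib

def rad (n : ℕ) : ℕ := ∏ p ∈ n.primeFactors, p

/-!
Fix `K > A` odd primes with product `R`. For every exponent vector `e ∈ {0, …, n}^K` the
number `∏ q ^ e_q ≤ R ^ n` can be multiplied by a power of two to land in `(x/2, x]`, where
`x = R ^ n`. These `(n + 1) ^ K` integers are distinct, and each has radical at most `2R`, so
`m / rad m ≥ x / (4R)`. Hence the sum is at least `(n + 1) ^ K x / (4R)`, whereas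
`x (log x) ^ A = x n ^ A (log R) ^ A`, and `(n + 1) ^ K` beats `n ^ A` by a factor `n + 1`.
-/

open Finset

lemma rad_pos (n : ℕ) : 0 < rad n :=
  prod_pos fun _ hp => (Nat.prime_of_mem_primeFactors hp).pos

lemma rad_dvd_self (n : ℕ) : rad n ∣ n :=
  Nat.prod_primeFactors_dvd n

lemma rad_le_prod_of_primeFactors_subset {n : ℕ} {S : Finset ℕ} (hS : ∀ p ∈ S, p.Prime)
    (h : n.primeFactors ⊆ S) : rad n ≤ ∏ p ∈ S, p :=
  Nat.le_of_dvd (prod_pos fun p hp => (hS p hp).pos) (prod_dvd_prod_of_subset _ _ _ h)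

lemma div_prod_le_div_rad {n : ℕ} {S : Finset ℕ} (hS : ∀ p ∈ S, p.Prime)
    (h : n.primeFactors ⊆ S) : (n : ℝ) / ∏ p ∈ S, p ≤ ((n / rad n : ℕ) : ℝ) := by
  rw [Nat.cast_div (rad_dvd_self n) (Nat.cast_ne_zero.2 (rad_pos n).ne')]
  gcongr
  · exact_mod_cast rad_pos n
  · exact_mod_cast rad_le_prod_of_primeFactors_subset hS h

/-- The largest number of the form `2 ^ k * t` that is at most `x` (for `0 < t ≤ x`). -/
def dyadicLift (x t : ℕ) : ℕ := 2 ^ Nat.log 2 (x / t) * t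

lemma dyadicLift_le {x t : ℕ} (ht : t ≤ x) : dyadicLift x t ≤ x := by
  rcases Nat.eq_zero_or_pos t with rfl | ht₀
  · simp [dyadicLift]
  calc dyadicLift x t ≤ x / t * t :=
        Nat.mul_le_mul_right t (Nat.pow_log_le_self 2 (Nat.div_pos ht ht₀).ne')
    _ ≤ x := Nat.div_mul_le_self x t

lemma lt_two_mul_dyadicLift (x : ℕ) {t : ℕ} (ht : 0 < t) : x < 2 * dyadicLift x t :=
  calc x < (x / t + 1) * t := Nat.lt_div_mul_add ht |>.trans_eq (by ring)
    _ ≤ 2 ^ (Nat.log 2 (x / t) + 1) * t :=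
        Nat.mul_le_mul_right t (Nat.lt_pow_succ_log_self one_lt_two _)
    _ = 2 * dyadicLift x t := by rw [dyadicLift, pow_succ]; ring

lemma dyadicLift_ne_zero (x : ℕ) {t : ℕ} (ht : t ≠ 0) : dyadicLift x t ≠ 0 :=
  mul_ne_zero (pow_ne_zero _ two_ne_zero) ht

lemma primeFactors_dyadicLift_subset (x : ℕ) {t : ℕ} (ht : t ≠ 0) :
    (dyadicLift x t).primeFactors ⊆ insert 2 t.primeFactors := by
  intro p hp
  obtain ⟨hp, hdvd, -⟩ := Nat.mem_primeFactors.1 hp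
  rcases hp.dvd_mul.1 hdvd with h | h
  · exact mem_insert.2 <| Or.inl <|
      (Nat.prime_dvd_prime_iff_eq hp Nat.prime_two).1 (hp.dvd_of_dvd_pow h)
  · exact mem_insert_of_mem (Nat.mem_primeFactors.2 ⟨hp, h, ht⟩)

lemma factorization_dyadicLift_of_ne_two (x : ℕ) {t p : ℕ} (ht : t ≠ 0) (hp : p ≠ 2) :
    (dyadicLift x t).factorization p = t.factorization p := by
  rw [dyadicLift, Nat.factorization_mul (pow_ne_zero _ two_ne_zero) ht,
    Nat.prime_two.factorization_pow]
  simp [Ne.symm hp]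

lemma prod_pow_ne_zero {f : ℕ →₀ ℕ} (hf : ∀ p ∈ f.support, p.Prime) :
    f.prod (· ^ ·) ≠ 0 :=
  prod_ne_zero_iff.2 fun p hp => pow_ne_zero _ (hf p hp).ne_zero

lemma primeFactors_prod_pow {f : ℕ →₀ ℕ} (hf : ∀ p ∈ f.support, p.Prime) :
    (f.prod (· ^ ·)).primeFactors = f.support := by
  rw [← Nat.support_factorization, Nat.prod_pow_factorization_eq_self hf]

lemma prod_pow_le_pow_of_mem_finsupp {Q : Finset ℕ} (hQ : ∀ q ∈ Q, 0 < q) {n : ℕ}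
    {f : ℕ →₀ ℕ} (hf : f ∈ Q.finsupp fun _ => range (n + 1)) :
    f.prod (· ^ ·) ≤ (∏ q ∈ Q, q) ^ n := by
  obtain ⟨hsupp, hle⟩ := mem_finsupp_iff.1 hf
  rw [Finsupp.prod_of_support_subset f hsupp _ fun _ _ => pow_zero _, ← prod_pow]
  exact prod_le_prod' fun q hq =>
    Nat.pow_le_pow_right (hQ q hq) (Nat.lt_succ_iff.1 (mem_range.1 (hle q hq)))

lemma injOn_dyadicLift_prod_pow (x : ℕ) {s : Set (ℕ →₀ ℕ)}
    (hs : ∀ f ∈ s, (∀ p ∈ f.support, p.Prime) ∧ f 2 = 0) :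
    Set.InjOn (fun f => dyadicLift x (f.prod (· ^ ·))) s := by
  intro f hf g hg h
  ext p
  rcases eq_or_ne p 2 with rfl | hp
  · rw [(hs f hf).2, (hs g hg).2]
  calc f p = (f.prod (· ^ ·)).factorization p := by
        rw [Nat.prod_pow_factorization_eq_self (hs f hf).1]
    _ = (g.prod (· ^ ·)).factorization p := by
        rw [← factorization_dyadicLift_of_ne_two x (prod_pow_ne_zero (hs f hf).1) hp,
          ← factorization_dyadicLift_of_ne_two x (prod_pow_ne_zero (hs g hg).1) hp]
        exact congrArg (·.factorization p) h
    _ = g p := by rw [Nat.prod_pow_factorization_eq_self (hs g hg).1]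

lemma div_four_mul_prod_le_div_rad_dyadicLift {Q : Finset ℕ} (hQ : ∀ q ∈ Q, q.Prime)
    (h2 : 2 ∉ Q) (x : ℕ) {f : ℕ →₀ ℕ} (hf : f.support ⊆ Q) :
    (x : ℝ) / (4 * ∏ q ∈ Q, q) ≤
      ((dyadicLift x (f.prod (· ^ ·)) / rad (dyadicLift x (f.prod (· ^ ·))) : ℕ) : ℝ) := by
  have hfp : ∀ p ∈ f.support, p.Prime := fun p hp => hQ p (hf hp)
  have hS : ∀ p ∈ insert 2 Q, p.Prime := by
    simpa only [mem_insert, forall_eq_or_imp] using ⟨Nat.prime_two, hQ⟩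
  have hsub : (dyadicLift x (f.prod (· ^ ·))).primeFactors ⊆ insert 2 Q :=
    (primeFactors_dyadicLift_subset x (prod_pow_ne_zero hfp)).trans
      (insert_subset_insert 2 ((primeFactors_prod_pow hfp).trans_subset hf))
  have hlt : (x : ℝ) < 2 * dyadicLift x (f.prod (· ^ ·)) := by
    exact_mod_cast lt_two_mul_dyadicLift x (Nat.pos_of_ne_zero (prod_pow_ne_zero hfp))
  have hR : (0 : ℝ) < (∏ q ∈ Q, q : ℕ) := by
    exact_mod_cast prod_pos fun q hq => (hQ q hq).pos
  refine le_trans ?_ (div_prod_le_div_rad hS hsub)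
  rw [prod_insert h2, div_le_div_iff₀ (by positivity) (by rw [Nat.cast_mul]; positivity),
    Nat.cast_mul, Nat.cast_two]
  nlinarith

lemma pow_card_mul_le_sum_div_rad {Q : Finset ℕ} (hQ : ∀ q ∈ Q, q.Prime) (h2 : 2 ∉ Q)
    {n x : ℕ} (hx : (∏ q ∈ Q, q) ^ n ≤ x) :
    ((n + 1) ^ #Q : ℝ) * (x / (4 * ∏ q ∈ Q, q)) ≤
      ∑ m ∈ Icc 1 x, ((m / rad m : ℕ) : ℝ) := by
  set box := Q.finsupp fun _ => range (n + 1)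
  set lift : (ℕ →₀ ℕ) → ℕ := fun f => dyadicLift x (f.prod (· ^ ·))
  have hsupp : ∀ f ∈ box, f.support ⊆ Q := fun f hf => (mem_finsupp_iff.1 hf).1
  have hprime : ∀ f ∈ box, ∀ p ∈ f.support, p.Prime := fun f hf p hp => hQ p (hsupp f hf hp)
  have hinj : Set.InjOn lift box := injOn_dyadicLift_prod_pow x fun f hf =>
    ⟨hprime f hf, Finsupp.notMem_support_iff.1 fun h => h2 (hsupp f hf h)⟩
  have hmaps : ∀ f ∈ box, lift f ∈ Icc 1 x := fun f hf =>
    mem_Icc.2 ⟨Nat.one_le_iff_ne_zero.2 <|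
        dyadicLift_ne_zero x (prod_pow_ne_zero (hprime f hf)),
      dyadicLift_le ((prod_pow_le_pow_of_mem_finsupp (fun q hq => (hQ q hq).pos) hf).trans hx)⟩
  calc ((n + 1) ^ #Q : ℝ) * (x / (4 * ∏ q ∈ Q, q))
        = ∑ f ∈ box, (x : ℝ) / (4 * ∏ q ∈ Q, q) := by simp [box, card_finsupp]
    _ ≤ ∑ f ∈ box, ((lift f / rad (lift f) : ℕ) : ℝ) := sum_le_sum fun f hf =>
        div_four_mul_prod_le_div_rad_dyadicLift hQ h2 x (hsupp f hf)
    _ = ∑ m ∈ box.image lift, ((m / rad m : ℕ) : ℝ) :=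
        (sum_image (f := fun m => ((m / rad m : ℕ) : ℝ)) hinj).symm
    _ ≤ ∑ m ∈ Icc 1 x, ((m / rad m : ℕ) : ℝ) :=
        sum_le_sum_of_subset_of_nonneg (image_subset_iff.2 hmaps) fun _ _ _ => by positivity

lemma mul_rpow_lt_pow_of_lt_succ {A c : ℝ} {K n : ℕ} (hA : 0 ≤ A) (hK : A + 1 ≤ K)
    (hn : 0 < n) (hc : c < n + 1) : c * (n : ℝ) ^ A < ((n : ℝ) + 1) ^ K := by
  have hn' : (0 : ℝ) < n := Nat.cast_pos.2 hn
  calc c * (n : ℝ) ^ A < (n + 1) * (n : ℝ) ^ A := mul_lt_mul_of_pos_right hc (by positivity)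
    _ ≤ (n + 1) * ((n : ℝ) + 1) ^ A := by gcongr; linarith
    _ = ((n : ℝ) + 1) ^ (A + 1) := by rw [Real.rpow_add_one (by positivity)]; ring
    _ ≤ ((n : ℝ) + 1) ^ (K : ℝ) := Real.rpow_le_rpow_of_exponent_le (by linarith) hK
    _ = ((n : ℝ) + 1) ^ K := Real.rpow_natCast _ _

theorem stmt_11 (A : ℝ) (hA : 0 < A) (C : ℝ) :
    ∃ x : ℕ, 2 ≤ x ∧
      C * ((x : ℝ) * Real.log x ^ A) < ∑ m ∈ Finset.Icc 1 x, ((m / rad m : ℕ) : ℝ) := by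
  obtain ⟨Q, hQ, hcard⟩ := (Nat.infinite_setOfPred_prime.sdiff
    (Set.finite_singleton 2)).exists_subset_card_eq (⌈A⌉₊ + 1)
  have hQp : ∀ q ∈ Q, q.Prime := fun q hq => (hQ hq).1
  have h2 : 2 ∉ Q := fun h => (hQ h).2 rfl
  set R := ∏ q ∈ Q, q
  have hR : 2 ≤ R := by
    obtain ⟨q, hq⟩ : Q.Nonempty := card_pos.1 (by omega)
    exact (hQp q hq).two_le.trans (single_le_prod' (fun p hp => (hQp p hp).one_le) hq)
  set c := 4 * R * max C 0 * Real.log R ^ A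
  set n := ⌈c⌉₊ + 1
  have hx : 2 ≤ R ^ n := hR.trans (Nat.le_self_pow (Nat.succ_ne_zero _) R)
  refine ⟨R ^ n, hx, ?_⟩
  have hlog : 0 ≤ Real.log R := Real.log_nonneg (by exact_mod_cast (one_le_two.trans hR))
  have hK : A + 1 ≤ ((#Q : ℕ) : ℝ) := by rw [hcard]; push_cast; linarith [Nat.le_ceil A]
  have hcn : c < n + 1 := by
    have := Nat.le_ceil c
    push_cast [n]; linarith
  calc C * (((R ^ n : ℕ) : ℝ) * Real.log (R ^ n : ℕ) ^ A)
      ≤ max C 0 * (((R ^ n : ℕ) : ℝ) * Real.log (R ^ n : ℕ) ^ A) := by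
        gcongr
        exact le_max_left C 0
    _ = c * (n : ℝ) ^ A * ((R ^ n : ℕ) / (4 * R)) := by
        push_cast
        rw [Real.log_pow, Real.mul_rpow (by positivity) hlog]
        field_simp
        ring
    _ < ((n : ℝ) + 1) ^ #Q * ((R ^ n : ℕ) / (4 * R)) :=
        mul_lt_mul_of_pos_right (mul_rpow_lt_pow_of_lt_succ hA.le hK (Nat.succ_pos _) hcn)
          (by positivity)
    _ ≤ _ := pow_card_mul_le_sum_div_rad hQp h2 le_rfl
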